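/- For every coronoid K there exists, up to symmetry of the hexagonal grid, exactly one non-degenerate coronoid N with G(N) = G(K); moreover N is obtained from K by adding exactly the degenerate (single-hexagon) corona holes of K. -/

import Mathlib

/-- Hexagons of the infinite hexagonal grid, indexed by integer pairs. -/
abbrev Hexa := ℤ × ℤ

/-- Two hexagons of the grid are adjacent (share an edge). -/
def HexAdj (a b : Hexa) : Prop :=
  (b.1 - a.1, b.2 - a.2) ∈
    ({(1,0), (-1,0), (0,1), (1,1), (0,-1), (-1,-1)} : Set (ℤ × ℤ))

/-- `a` and `b` are joined by a path of pairwise-adjacent hexagons all lying in `K`. -/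
def ReachIn (K : Set Hexa) (a b : Hexa) : Prop :=
  a ∈ K ∧ b ∈ K ∧
    Relation.ReflTransGen (fun x y => HexAdj x y ∧ x ∈ K ∧ y ∈ K) a b

/-- A hexagonal system is connected if any two of its hexagons are joined inside it. -/
def IsConnectedSys (K : Set Hexa) : Prop := ∀ a ∈ K, ∀ b ∈ K, ReachIn K a b

/-- `C` is a connected component of the hexagonal system `K`. -/
def IsComponent (K C : Set Hexa) : Prop := ∃ a ∈ K, C = {b | ReachIn K a b}

/-- A coronoid is a finite connected (nonempty) hexagonal system. -/
def IsCoronoid (K : Set Hexa) : Prop := K.Finite ∧ K.Nonempty ∧ IsConnectedSys K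

/-- A benzenoid is a coronoid whose complement is connected. -/
def IsBenzenoid (K : Set Hexa) : Prop := IsCoronoid K ∧ IsConnectedSys Kᶜ

/-- The infinite hexagonal lattice (1-skeleton of the hexagonal tiling), in "brick wall"
coordinates: all horizontal edges, and vertical edges `(x,y)-(x,y+1)` when `x+y` is even. -/
def HexLattice : SimpleGraph (ℤ × ℤ) :=
  SimpleGraph.fromRel (fun u v =>
    (u.2 = v.2 ∧ v.1 = u.1 + 1) ∨
    (u.1 = v.1 ∧ v.2 = u.2 + 1 ∧ (u.1 + u.2) % 2 = 0))

/-- The six boundary vertices of the hexagon `h`; the hexagon `(i, y)` has bottom-left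
lattice vertex `(2*i - y, y)`, which makes hexagons `h`, `k` share an edge iff `HexAdj h k`. -/
def hexVerts (h : ℤ × ℤ) : Set (ℤ × ℤ) :=
  {(2*h.1 - h.2, h.2), (2*h.1 - h.2 + 1, h.2), (2*h.1 - h.2 + 2, h.2),
   (2*h.1 - h.2, h.2 + 1), (2*h.1 - h.2 + 1, h.2 + 1), (2*h.1 - h.2 + 2, h.2 + 1)}

/-- The six boundary edges of the hexagon `h`, as a relation on lattice vertices. -/
def boundaryRel (h : ℤ × ℤ) (u v : ℤ × ℤ) : Prop :=
  (u, v) ∈ ({((2*h.1 - h.2, h.2), (2*h.1 - h.2 + 1, h.2)),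
             ((2*h.1 - h.2 + 1, h.2), (2*h.1 - h.2 + 2, h.2)),
             ((2*h.1 - h.2, h.2 + 1), (2*h.1 - h.2 + 1, h.2 + 1)),
             ((2*h.1 - h.2 + 1, h.2 + 1), (2*h.1 - h.2 + 2, h.2 + 1)),
             ((2*h.1 - h.2, h.2), (2*h.1 - h.2, h.2 + 1)),
             ((2*h.1 - h.2 + 2, h.2), (2*h.1 - h.2 + 2, h.2 + 1))}
      : Set ((ℤ × ℤ) × (ℤ × ℤ)))

/-- The boundary 6-cycle `∂h` of a hexagon, as a graph. -/
def hexBoundary (h : ℤ × ℤ) : SimpleGraph (ℤ × ℤ) :=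
  SimpleGraph.fromRel (boundaryRel h)

/-- The skeleton `G(K)`: all vertices and edges incident with a hexagon of `K`. -/
def skeleton (K : Set Hexa) : SimpleGraph (ℤ × ℤ) :=
  SimpleGraph.fromRel (fun u v => ∃ h ∈ K, boundaryRel h u v)

/-- The vertex set of the skeleton of `K`. -/
def skelVerts (K : Set Hexa) : Set (ℤ × ℤ) := ⋃ h ∈ K, hexVerts h

/-- The border `∂K`: edges incident with exactly one hexagon of `K` (boundary edges),
together with their endpoints (boundary vertices). -/
def border (K : Set Hexa) : SimpleGraph (ℤ × ℤ) :=
  SimpleGraph.fromRel (fun u v => ∃! h, h ∈ K ∧ (hexBoundary h).Adj u v)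

/-- A coronoid is non-degenerate if no component of its complement is a single hexagon. -/
def NonDegenerate (K : Set Hexa) : Prop :=
  ∀ C, IsComponent Kᶜ C → ∀ h : Hexa, C ≠ {h}

/-- The degenerate corona holes of `K`: hexagons outside `K` all of whose neighbours
are in `K`. -/
def DegHoles (K : Set Hexa) : Set Hexa :=
  {h | h ∉ K ∧ ∀ b, HexAdj h b → b ∈ K}

/-! A hexagon outside `S` all of whose six edges lie in `G(S)` must have all six neighbours in
`S`: the edge it shares with a neighbour `b` is carried by no other hexagon than `b`. So the
hexagons whose boundary lies in `G(S)` are exactly `S ∪ DegHoles S`, a set determined by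
`G(S)` alone. A non-degenerate `N` has no degenerate holes, so `G(N) = G(K)` forces
`N = K ∪ DegHoles K`; conversely `K ∪ DegHoles K` has the skeleton of `K` and, by the same
characterization, no degenerate holes of its own. -/

lemma hexAdj_iff (a b : Hexa) : HexAdj a b ↔
    (b.1 = a.1 + 1 ∧ b.2 = a.2) ∨ (b.1 = a.1 - 1 ∧ b.2 = a.2) ∨
    (b.1 = a.1 ∧ b.2 = a.2 + 1) ∨ (b.1 = a.1 + 1 ∧ b.2 = a.2 + 1) ∨
    (b.1 = a.1 ∧ b.2 = a.2 - 1) ∨ (b.1 = a.1 - 1 ∧ b.2 = a.2 - 1) := by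
  simp only [HexAdj, Set.mem_insert_iff, Set.mem_singleton_iff, Prod.mk.injEq]
  omega

lemma HexAdj.symm {a b : Hexa} (h : HexAdj a b) : HexAdj b a := by
  rw [hexAdj_iff] at h ⊢
  omega

lemma HexAdj.ne {a b : Hexa} (h : HexAdj a b) : a ≠ b := by
  rintro rfl
  rw [hexAdj_iff] at h
  omega

lemma hexAdj_add_one_zero (a : Hexa) : HexAdj a (a + (1, 0)) := by
  simp [hexAdj_iff]

lemma boundaryRel_ne {g u v : Hexa} (h : boundaryRel g u v) : u ≠ v := by
  simp only [boundaryRel, Set.mem_insert_iff, Set.mem_singleton_iff, Prod.ext_iff] at h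
  rintro rfl
  omega

lemma exists_hexAdj_boundaryRel {g u v : Hexa} (hb : boundaryRel g u v) :
    ∃ g', HexAdj g g' ∧ boundaryRel g' u v := by
  simp only [boundaryRel, Set.mem_insert_iff, Set.mem_singleton_iff] at hb
  rcases hb with hb | hb | hb | hb | hb | hb <;>
    [exists g - (1, 1); exists g - (0, 1); exists g + (0, 1); exists g + (1, 1);
      exists g - (1, 0); exists g + (1, 0)] <;>
    refine ⟨by simp [hexAdj_iff], ?_⟩ <;>
    simp only [boundaryRel, Set.mem_insert_iff, Set.mem_singleton_iff, Prod.ext_iff,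
      Prod.fst_add, Prod.snd_add, Prod.fst_sub, Prod.snd_sub] at hb ⊢ <;>
    omega

lemma HexAdj.exists_edge_carried_only_by {h b : Hexa} (hadj : HexAdj h b) :
    ∃ u v, boundaryRel h u v ∧
      ∀ g, (boundaryRel g u v ∨ boundaryRel g v u) → g = h ∨ g = b := by
  set x := 2 * h.1 - h.2
  rw [hexAdj_iff] at hadj
  rcases hadj with hd | hd | hd | hd | hd | hd <;>
    [exists (x + 2, h.2), (x + 2, h.2 + 1); exists (x, h.2), (x, h.2 + 1);
      exists (x, h.2 + 1), (x + 1, h.2 + 1); exists (x + 1, h.2 + 1), (x + 2, h.2 + 1);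
      exists (x + 1, h.2), (x + 2, h.2); exists (x, h.2), (x + 1, h.2)] <;>
    refine ⟨by simp [boundaryRel, x], fun g hg => ?_⟩ <;>
    simp only [boundaryRel, Set.mem_insert_iff, Set.mem_singleton_iff, Prod.ext_iff, x]
      at hg ⊢ <;>
    omega

namespace ReachIn

variable {K L : Set Hexa} {a b c : Hexa}

lemma refl (ha : a ∈ K) : ReachIn K a a :=
  ⟨ha, ha, .refl⟩

lemma of_hexAdj (ha : a ∈ K) (hb : b ∈ K) (hab : HexAdj a b) : ReachIn K a b :=
  ⟨ha, hb, .single ⟨hab, ha, hb⟩⟩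

lemma trans (hab : ReachIn K a b) (hbc : ReachIn K b c) : ReachIn K a c :=
  ⟨hab.1, hbc.2.1, hab.2.2.trans hbc.2.2⟩

lemma symm (h : ReachIn K a b) : ReachIn K b a :=
  ⟨h.2.1, h.1, Relation.ReflTransGen.mono (fun _ _ hxy => ⟨hxy.1.symm, hxy.2.2, hxy.2.1⟩) _ _
    (Relation.ReflTransGen.swap _ _ h.2.2)⟩

lemma mono (hKL : K ⊆ L) (h : ReachIn K a b) : ReachIn L a b :=
  ⟨hKL h.1, hKL h.2.1,
    Relation.ReflTransGen.mono (fun _ _ hxy => ⟨hxy.1, hKL hxy.2.1, hKL hxy.2.2⟩) _ _ h.2.2⟩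

lemma eq_of_forall_hexAdj_notMem (hiso : ∀ c, HexAdj a c → c ∉ K) (h : ReachIn K a b) :
    b = a := by
  rcases h.2.2.cases_head with rfl | ⟨c, ⟨hac, -, hc⟩, -⟩
  · rfl
  · exact absurd hc (hiso c hac)

end ReachIn

lemma IsConnectedSys.union_of_forall_exists_hexAdj {K L : Set Hexa} (hK : IsConnectedSys K)
    (hL : ∀ a ∈ L, ∃ b ∈ K, HexAdj a b) : IsConnectedSys (K ∪ L) := by
  have reach_K : ∀ a ∈ K ∪ L, ∃ a' ∈ K, ReachIn (K ∪ L) a a' := by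
    rintro a (ha | ha)
    · exact ⟨a, ha, .refl (.inl ha)⟩
    · obtain ⟨b, hb, hab⟩ := hL a ha
      exact ⟨b, hb, .of_hexAdj (.inr ha) (.inl hb) hab⟩
  intro a ha b hb
  obtain ⟨a', ha', haa'⟩ := reach_K a ha
  obtain ⟨b', hb', hbb'⟩ := reach_K b hb
  exact haa'.trans (((hK a' ha' b' hb').mono Set.subset_union_left).trans hbb'.symm)

lemma IsCoronoid.union_degHoles {K : Set Hexa} (hK : IsCoronoid K) :
    IsCoronoid (K ∪ DegHoles K) := by
  obtain ⟨hfin, hne, hconn⟩ := hK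
  have hnbr : ∀ a ∈ DegHoles K, a + (1, 0) ∈ K := fun a ha => ha.2 _ (hexAdj_add_one_zero a)
  exact ⟨hfin.union ((hfin.preimage (add_left_injective _).injOn).subset hnbr),
    hne.mono Set.subset_union_left,
    hconn.union_of_forall_exists_hexAdj fun a ha => ⟨_, hnbr a ha, hexAdj_add_one_zero a⟩⟩

lemma nonDegenerate_iff_degHoles_eq_empty {N : Set Hexa} :
    NonDegenerate N ↔ DegHoles N = ∅ := by
  rw [Set.eq_empty_iff_forall_notMem]
  constructor
  · rintro hnd h ⟨hN, hnbr⟩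
    refine hnd _ ⟨h, hN, rfl⟩ h (Set.eq_singleton_iff_unique_mem.2 ⟨.refl hN, fun b hb => ?_⟩)
    exact ReachIn.eq_of_forall_hexAdj_notMem (fun c hc => not_not.2 (hnbr c hc)) hb
  · rintro hD C ⟨a, -, rfl⟩ h hC
    have hah : h ∈ {b | ReachIn Nᶜ a b} := hC ▸ Set.mem_singleton h
    refine hD h ⟨hah.2.1, fun b hb => by_contra fun hbN => hb.ne ?_⟩
    have hbC : b ∈ ({h} : Set Hexa) := hC ▸ hah.trans (.of_hexAdj hah.2.1 hbN hb)
    exact hbC.symm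

lemma skeleton_adj {S : Set Hexa} {u v : Hexa} : (skeleton S).Adj u v ↔
    u ≠ v ∧ ∃ h ∈ S, boundaryRel h u v ∨ boundaryRel h v u := by
  simp only [skeleton, SimpleGraph.fromRel_adj, ← exists_or, and_or_left]

lemma skeleton_adj_of_mem {S : Set Hexa} {h u v : Hexa} (hh : h ∈ S)
    (huv : boundaryRel h u v) : (skeleton S).Adj u v :=
  skeleton_adj.2 ⟨boundaryRel_ne huv, h, hh, .inl huv⟩

lemma mem_union_degHoles_iff {S : Set Hexa} {h : Hexa} :
    h ∈ S ∪ DegHoles S ↔ ∀ u v, boundaryRel h u v → (skeleton S).Adj u v := by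
  refine ⟨?_, fun hall => ?_⟩
  · rintro (hS | ⟨-, hnbr⟩) u v huv
    · exact skeleton_adj_of_mem hS huv
    · obtain ⟨g, hg, hguv⟩ := exists_hexAdj_boundaryRel huv
      exact skeleton_adj_of_mem (hnbr g hg) hguv
  by_cases hS : h ∈ S
  · exact .inl hS
  refine .inr ⟨hS, fun b hb => ?_⟩
  obtain ⟨u, v, huv, honly⟩ := hb.exists_edge_carried_only_by
  obtain ⟨-, g, hg, hguv⟩ := skeleton_adj.1 (hall u v huv)
  rcases honly g hguv with rfl | rfl
  · exact absurd hg hS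
  · exact hg

lemma union_degHoles_eq_of_skeleton_eq {S T : Set Hexa} (h : skeleton S = skeleton T) :
    S ∪ DegHoles S = T ∪ DegHoles T := by
  ext x
  rw [mem_union_degHoles_iff, mem_union_degHoles_iff, h]

lemma skeleton_union_degHoles (K : Set Hexa) : skeleton (K ∪ DegHoles K) = skeleton K := by
  have carriers : ∀ u v, (∃ h ∈ K ∪ DegHoles K, boundaryRel h u v) ↔
      ∃ h ∈ K, boundaryRel h u v := fun u v =>
    ⟨fun ⟨h, hh, huv⟩ => hh.elim (fun hK => ⟨h, hK, huv⟩) fun hD =>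
        let ⟨g, hg, hguv⟩ := exists_hexAdj_boundaryRel huv
        ⟨g, hD.2 g hg, hguv⟩,
      fun ⟨h, hK, huv⟩ => ⟨h, .inl hK, huv⟩⟩
  ext u v
  simp only [skeleton, SimpleGraph.fromRel_adj, carriers]

lemma degHoles_union_degHoles (K : Set Hexa) : DegHoles (K ∪ DegHoles K) = ∅ := by
  have h := union_degHoles_eq_of_skeleton_eq (skeleton_union_degHoles K)
  rw [Set.union_eq_left] at h
  exact Set.eq_empty_of_forall_notMem fun x hx => hx.1 (h hx)

/-- for every coronoid `K` there is exactly one non-degenerate coronoid `N`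
with the same skeleton; it is obtained from `K` by adding exactly the degenerate
(single-hexagon) corona holes. -/
theorem stmt16 (K : Set Hexa) (hK : IsCoronoid K) :
    (∃! N : Set Hexa, IsCoronoid N ∧ NonDegenerate N ∧ skeleton N = skeleton K) ∧
    (IsCoronoid (K ∪ DegHoles K) ∧ NonDegenerate (K ∪ DegHoles K) ∧
      skeleton (K ∪ DegHoles K) = skeleton K) := by
  have hN : IsCoronoid (K ∪ DegHoles K) ∧ NonDegenerate (K ∪ DegHoles K) ∧
      skeleton (K ∪ DegHoles K) = skeleton K :=
    ⟨hK.union_degHoles, nonDegenerate_iff_degHoles_eq_empty.2 (degHoles_union_degHoles K),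
      skeleton_union_degHoles K⟩
  refine ⟨⟨K ∪ DegHoles K, hN, fun N ⟨_, hnd, hsk⟩ => ?_⟩, hN⟩
  rw [← union_degHoles_eq_of_skeleton_eq hsk, nonDegenerate_iff_degHoles_eq_empty.1 hnd,
    Set.union_empty]
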